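/- arXiv:math/0212062 — 3 statements merged into one kernel-verified Lean document; each statement's English description precedes it below -/
import Mathlib

section
/- Let F : ℝ → ℝ be twice continuously differentiable and define H : ℝ → ℝ by H(t) = t·F′(t). Then for every z, u ∈ ℂ, the real Fréchet derivative of the map w ↦ H(|w|²) at z, evaluated in the direction u, equals −ω_F(z)(iz, u); explicitly, fderiv_ℝ (w ↦ H(|w|²))(z)(u) = 2·(F″(|z|²)·|z|² + F′(|z|²))·Re(z̄·u) = −ω_F(z)(iz, u). In other words, φ(z) = H(|z|²) is a moment map for the standard rotation action of S¹ on (ℂ, ω_F), whose infinitesimal generator is the vector field X(z) = iz. -/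
/-! By the chain rule, `d(H(|w|²))_z(u) = H'(|z|²) · 2⟨z, u⟩` with `H' = F' + t F''`, and
`⟨z, u⟩ = Re(z̄ u)`. On the other hand `ω_F(z)(iz, u)` pairs `iz = (-Im z, Re z)` with `u`
through the determinant, which gives `-(Re z Re u + Im z Im u) = -Re(z̄ u)`. -/

open ComplexConjugate

theorem hasDerivAt_mul_deriv {F : ℝ → ℝ} {t : ℝ} (hF : DifferentiableAt ℝ (deriv F) t) :
    HasDerivAt (fun s => s * deriv F s) (deriv F t + t * deriv (deriv F) t) t := by
  simpa using (hasDerivAt_id' t).fun_mul hF.hasDerivAt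

theorem fderiv_comp_norm_sq_apply {E : Type*} [NormedAddCommGroup E] [InnerProductSpace ℝ E]
    {g : ℝ → ℝ} {g' : ℝ} {z : E} (hg : HasDerivAt g g' (‖z‖ ^ 2)) (u : E) :
    fderiv ℝ (fun w => g (‖w‖ ^ 2)) z u = g' * (2 * inner ℝ z u) := by
  rw [show (fun w => g (‖w‖ ^ 2)) = g ∘ fun w => ‖w‖ ^ 2 from rfl,
    (hg.comp_hasFDerivAt z (hasStrictFDerivAt_norm_sq z).hasFDerivAt).fderiv]
  simp

theorem Complex.inner_eq_re_conj_mul (z u : ℂ) : inner ℝ z u = (conj z * u).re := by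
  rw [Complex.inner, mul_comm]

theorem Complex.re_conj_mul_eq_neg_det_I_mul (z u : ℂ) :
    (conj z * u).re = -((I * z).re * u.im - (I * z).im * u.re) := by
  simp only [mul_re, mul_im, conj_re, conj_im, I_re, I_im]
  ring

/-- Lemma 3.1(2) of "Kähler cuts": `φ(z) = H(|z|²)`, `H(t) = t·F'(t)`, is a moment
map for the standard rotation action of `S¹` on `(ℂ, ω_F)`, whose infinitesimal
generator is `X(z) = iz`.  Explicitly, the real Fréchet derivative of `w ↦ H(|w|²)`
at `z` in the direction `u` equals `2(F''(|z|²)|z|² + F'(|z|²))·Re(z̄·u)`, which is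
`-ω_F(z)(iz, u)`, where `ω_F(z)(u,v) = 2(F''(|z|²)|z|² + F'(|z|²))(Re u · Im v - Im u · Re v)`. -/
theorem stmt_2 (F H : ℝ → ℝ) (hF : ContDiff ℝ 2 F)
    (hH : ∀ t : ℝ, H t = t * deriv F t)
    (ω : ℂ → ℂ → ℂ → ℝ)
    (hω : ∀ z u v : ℂ, ω z u v =
      2 * (deriv (deriv F) (‖z‖ ^ 2) * ‖z‖ ^ 2 + deriv F (‖z‖ ^ 2)) *
        (u.re * v.im - u.im * v.re))
    (z u : ℂ) :
    fderiv ℝ (fun w : ℂ => H (‖w‖ ^ 2)) z u =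
        2 * (deriv (deriv F) (‖z‖ ^ 2) * ‖z‖ ^ 2 + deriv F (‖z‖ ^ 2)) *
          ((starRingEnd ℂ) z * u).re ∧
      fderiv ℝ (fun w : ℂ => H (‖w‖ ^ 2)) z u = -ω z (Complex.I * z) u := by
  obtain rfl : H = fun t => t * deriv F t := funext hH
  have hderiv := fderiv_comp_norm_sq_apply
    (hasDerivAt_mul_deriv (hF.differentiable_deriv_two (‖z‖ ^ 2))) u
  rw [Complex.inner_eq_re_conj_mul] at hderiv
  have hconj : fderiv ℝ (fun w : ℂ => ‖w‖ ^ 2 * deriv F (‖w‖ ^ 2)) z u =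
      2 * (deriv (deriv F) (‖z‖ ^ 2) * ‖z‖ ^ 2 + deriv F (‖z‖ ^ 2)) * (conj z * u).re := by
    rw [hderiv]
    ring
  refine ⟨hconj, ?_⟩
  rw [hconj, hω, Complex.re_conj_mul_eq_neg_det_I_mul]
  ring
end

section
/- Let M be a set, and let τ : ℝ → M → M be a flow: τ(0, p) = p and τ(s + t, p) = τ(s, τ(t, p)) for all s, t ∈ ℝ, p ∈ M. Let φ : M → ℝ and λ ∈ ℝ. Assume: (i) for every p ∈ M the function φ_p(t) = φ(τ(t, p)) is continuous, and is either constant or strictly increasing; (ii) if φ_p is constant then φ(p) ≠ λ. Define M_o^λ = {q ∈ M : φ(q) < λ} and g : M_o^λ → M by g(q) = τ(−(1/2)·log(λ − φ(q)), q). Then g is injective on M_o^λ, and its image is exactly the set M^# = {p ∈ M : φ(p) < λ} ∪ {p ∈ M : ∃ t ∈ ℝ, φ(τ(t, p)) = λ}. -/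
/-- IVT step: if `h t = t - (1/2)·log(lam - f t)` is `≤ 0` at `a` and `≥ 0` at `b`,
with `f b < lam`, then `h` has a root `t₀` with `f t₀ < lam`. -/
lemma ivt_step (f : ℝ → ℝ) (lam : ℝ) (hc : Continuous f) (hm : Monotone f)
    (a b : ℝ) (hab : a ≤ b) (hfb : f b < lam)
    (ha : a ≤ (1/2) * Real.log (lam - f a))
    (hb : (1/2) * Real.log (lam - f b) ≤ b) :
    ∃ t₀ : ℝ, f t₀ < lam ∧ t₀ = (1/2) * Real.log (lam - f t₀) := by
  set h : ℝ → ℝ := fun t => t - (1/2) * Real.log (lam - f t) with hh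
  have hpos : ∀ t ∈ Set.Icc a b, (0:ℝ) < lam - f t := by
    intro t ht
    have : f t ≤ f b := hm ht.2
    linarith
  have hcont : ContinuousOn h (Set.Icc a b) := by
    apply ContinuousOn.sub continuousOn_id
    apply ContinuousOn.mul continuousOn_const
    exact ContinuousOn.log ((continuous_const.sub hc).continuousOn)
      (fun t ht => ne_of_gt (hpos t ht))
  have h0 : (0:ℝ) ∈ Set.Icc (h a) (h b) := by
    constructor
    · simp only [hh]; linarith
    · simp only [hh]; linarith
  obtain ⟨t₀, ht₀, hroot⟩ := intermediate_value_Icc hab hcont h0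
  refine ⟨t₀, ?_, ?_⟩
  · have : f t₀ ≤ f b := hm ht₀.2
    linarith
  · simp only [hh] at hroot
    linarith

/-- Existence of a solution of `t₀ = (1/2)·log(lam - f t₀)` with `f t₀ < lam`, for
a continuous strictly increasing `f` that takes a value below `lam`. -/
lemma exists_fixed (f : ℝ → ℝ) (lam : ℝ) (hc : Continuous f) (hm : StrictMono f)
    (hs : ∃ s, f s < lam) :
    ∃ t₀ : ℝ, f t₀ < lam ∧ t₀ = (1/2) * Real.log (lam - f t₀) := by
  obtain ⟨s, hslt⟩ := hs
  by_cases hA : ∃ t₁, f t₁ = lam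
  · -- case A: f hits lam at t₁
    obtain ⟨t₁, ht₁⟩ := hA
    have hfa₀ : f (t₁ - 1) < lam := by
      rw [← ht₁]; exact hm (by linarith)
    obtain ⟨a, ha⟩ : ∃ a, a = min (t₁ - 1) (Real.log (lam - f (t₁ - 1)) / 2) :=
      ⟨_, rfl⟩
    have haa₀ : a ≤ t₁ - 1 := ha ▸ min_le_left _ _
    have haL : a ≤ Real.log (lam - f (t₁ - 1)) / 2 := ha ▸ min_le_right _ _
    have hfa : f a ≤ f (t₁ - 1) := hm.monotone haa₀
    -- choose b near t₁ with lam - f b < exp (2 * (t₁ - 1))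
    have hε : (0:ℝ) < Real.exp (2 * (t₁ - 1)) := Real.exp_pos _
    obtain ⟨δ, hδpos, hδ⟩ := Metric.continuous_iff.mp hc t₁ _ hε
    obtain ⟨b, hb⟩ : ∃ b, b = t₁ - min (δ/2) (1/2) := ⟨_, rfl⟩
    have hmin1 : min (δ/2) (1/2) ≤ δ/2 := min_le_left _ _
    have hmin2 : min (δ/2) (1/2) ≤ 1/2 := min_le_right _ _
    have hminpos : (0:ℝ) < min (δ/2) (1/2) := by positivity
    have hbt₁ : b < t₁ := by rw [hb]; linarith
    have hba₀ : t₁ - 1 < b := by rw [hb]; linarith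
    have hfb : f b < lam := ht₁ ▸ hm hbt₁
    have hdist : dist b t₁ < δ := by
      rw [Real.dist_eq, abs_of_nonpos (by rw [hb]; linarith)]
      rw [hb]; linarith
    have hclose : lam - f b < Real.exp (2 * (t₁ - 1)) := by
      have := hδ b hdist
      rw [Real.dist_eq, ht₁] at this
      calc lam - f b ≤ |f b - lam| := by rw [abs_sub_comm]; exact le_abs_self _
        _ < _ := this
    have hlogb : Real.log (lam - f b) < 2 * b := by
      have h1 : Real.log (lam - f b) < 2 * (t₁ - 1) :=
        (Real.log_lt_iff_lt_exp (by linarith)).mpr hclose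
      linarith
    apply ivt_step f lam hc hm.monotone a b (by linarith) hfb
    · have hlogmon : Real.log (lam - f (t₁ - 1)) ≤ Real.log (lam - f a) :=
        Real.log_le_log (by linarith) (by linarith)
      linarith
    · linarith
  · -- case B: f never equals lam, hence always below
    push_neg at hA
    have hall : ∀ t, f t < lam := by
      intro t
      rcases lt_or_ge (f t) lam with h | h
      · exact h
      rcases eq_or_lt_of_le h with h' | h'
      · exact absurd h'.symm (hA t)
      · exfalso
        have hst : s < t := hm.lt_iff_lt.mp (by linarith)
        have : lam ∈ Set.Icc (f s) (f t) := ⟨le_of_lt hslt, le_of_lt h'⟩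
        obtain ⟨t₁, _, ht₁⟩ := intermediate_value_Icc (le_of_lt hst)
          hc.continuousOn this
        exact hA t₁ ht₁
    set L : ℝ := Real.log (lam - f 0) with hL
    set a : ℝ := min 0 (L/2) with ha
    set b : ℝ := max 0 (L/2) with hb
    have haf : f a ≤ f 0 := hm.monotone (min_le_left _ _)
    have hbf : f 0 ≤ f b := hm.monotone (le_max_left _ _)
    have h0lam : f 0 < lam := hall 0
    apply ivt_step f lam hc hm.monotone a b (min_le_max) (hall b)
    · have : L ≤ Real.log (lam - f a) := Real.log_le_log (by linarith) (by linarith)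
      have : a ≤ L/2 := min_le_right _ _
      linarith [Real.log_le_log (show (0:ℝ) < lam - f 0 by linarith)
        (show lam - f 0 ≤ lam - f a by linarith)]
    · have hbpos : (0:ℝ) < lam - f b := by linarith [hall b]
      have : Real.log (lam - f b) ≤ L :=
        Real.log_le_log hbpos (by linarith)
      have : L/2 ≤ b := le_max_right _ _
      linarith [Real.log_le_log hbpos (show lam - f b ≤ lam - f 0 by linarith)]

/-- Set-theoretic content of Theorem 2.1 and formula (2.8) of "Kähler cuts": for a
flow `τ` (the gradient flow of the moment map `φ`) along which `φ` is continuous and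
either constant or strictly increasing, and constant orbits avoid the level `λ`, the
map `g(q) = τ(-(1/2)·log(λ - φ(q)), q)` is injective on `M_o^λ = {φ < λ}` and its
image is exactly `M^# = {φ < λ} ∪ {p | ∃ t, φ(τ(t,p)) = λ}`. -/
theorem stmt_7 {M : Type*} (τ : ℝ → M → M)
    (hflow0 : ∀ p : M, τ 0 p = p)
    (hflow : ∀ s t : ℝ, ∀ p : M, τ (s + t) p = τ s (τ t p))
    (φ : M → ℝ) (lam : ℝ)
    (hcont : ∀ p : M, Continuous (fun t : ℝ => φ (τ t p)))
    (hmono : ∀ p : M, (∀ s t : ℝ, φ (τ s p) = φ (τ t p)) ∨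
      StrictMono (fun t : ℝ => φ (τ t p)))
    (hconst : ∀ p : M, (∀ s t : ℝ, φ (τ s p) = φ (τ t p)) → φ p ≠ lam)
    (g : M → M) (hg : ∀ q : M, g q = τ (-(1 / 2) * Real.log (lam - φ q)) q) :
    Set.InjOn g {q : M | φ q < lam} ∧
      g '' {q : M | φ q < lam} =
        {p : M | φ p < lam} ∪ {p : M | ∃ t : ℝ, φ (τ t p) = lam} := by
  have hinv : ∀ (t : ℝ) (p : M), τ (-t) (τ t p) = p := by
    intro t p
    rw [← hflow, neg_add_cancel, hflow0]
  constructor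
  · -- injectivity
    intro q₁ h₁ q₂ h₂ heq
    simp only [Set.mem_setOf_eq] at h₁ h₂
    rw [hg, hg] at heq
    set κ₁ : ℝ := -(1 / 2) * Real.log (lam - φ q₁) with hκ₁
    set κ₂ : ℝ := -(1 / 2) * Real.log (lam - φ q₂) with hκ₂
    have hq₁ : q₁ = τ (κ₂ - κ₁) q₂ := by
      have h := congrArg (τ (-κ₁)) heq
      rw [hinv, ← hflow] at h
      rw [h]; ring_nf
    have hfval : φ q₁ = φ (τ (κ₂ - κ₁) q₂) := by rw [← hq₁]
    rcases hmono q₂ with hc | hsm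
    · -- constant orbit
      have h0 : φ (τ (κ₂ - κ₁) q₂) = φ (τ 0 q₂) := hc _ _
      rw [hflow0] at h0
      have hφeq : φ q₁ = φ q₂ := hfval.trans h0
      have : κ₁ = κ₂ := by rw [hκ₁, hκ₂, hφeq]
      rw [hq₁, this, sub_self, hflow0]
    · -- strictly increasing orbit
      have hκeq : κ₂ - κ₁ = 0 := by
        rcases lt_trichotomy (κ₂ - κ₁) 0 with h | h | h
        · exfalso
          have hlt : φ (τ (κ₂ - κ₁) q₂) < φ (τ 0 q₂) := hsm h
          rw [hflow0, ← hfval] at hlt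
          have hlog : Real.log (lam - φ q₂) < Real.log (lam - φ q₁) :=
            Real.log_lt_log (by linarith) (by linarith)
          rw [hκ₁, hκ₂] at h
          linarith
        · exact h
        · exfalso
          have hlt : φ (τ 0 q₂) < φ (τ (κ₂ - κ₁) q₂) := hsm h
          rw [hflow0, ← hfval] at hlt
          have hlog : Real.log (lam - φ q₁) < Real.log (lam - φ q₂) :=
            Real.log_lt_log (by linarith) (by linarith)
          rw [hκ₁, hκ₂] at h
          linarith
      rw [hq₁, hκeq, hflow0]
  · -- image
    ext p
    simp only [Set.mem_image, Set.mem_setOf_eq, Set.mem_union]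
    constructor
    · rintro ⟨q, hq, rfl⟩
      set κ : ℝ := -(1 / 2) * Real.log (lam - φ q) with hκ
      have hgq : g q = τ κ q := hg q
      rcases hmono q with hc | hsm
      · left
        have : φ (τ κ q) = φ (τ 0 q) := hc _ _
        rw [hgq, this, hflow0]; exact hq
      · by_cases hlt : φ (g q) < lam
        · exact Or.inl hlt
        · right
          push_neg at hlt
          rw [hgq] at hlt
          have h0 : φ (τ 0 q) < φ (τ κ q) := by rw [hflow0]; linarith
          have hκpos : (0:ℝ) < κ := hsm.lt_iff_lt.mp h0
          have hmem : lam ∈ Set.Icc (φ (τ 0 q)) (φ (τ κ q)) := by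
            rw [hflow0]; exact ⟨le_of_lt hq, hlt⟩
          obtain ⟨t₁, _, ht₁⟩ := intermediate_value_Icc (le_of_lt hκpos)
            (hcont q).continuousOn hmem
          refine ⟨t₁ - κ, ?_⟩
          rw [hgq, ← hflow, sub_add_cancel]
          exact ht₁
    · intro hp
      -- produce t₀ with φ (τ t₀ p) < lam and t₀ = (1/2) log (lam - φ (τ t₀ p))
      have hex : ∃ t₀ : ℝ, φ (τ t₀ p) < lam ∧
          t₀ = (1/2) * Real.log (lam - φ (τ t₀ p)) := by
        rcases hmono p with hc | hsm
        · -- constant orbit: p must satisfy φ p < lam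
          have hplt : φ p < lam := by
            rcases hp with h | ⟨t₁, ht₁⟩
            · exact h
            · exfalso
              have : φ (τ 0 p) = φ (τ t₁ p) := hc _ _
              rw [hflow0, ht₁] at this
              exact hconst p hc this
          refine ⟨(1/2) * Real.log (lam - φ p), ?_, ?_⟩
          · have : φ (τ ((1/2) * Real.log (lam - φ p)) p) = φ (τ 0 p) := hc _ _
            rw [this, hflow0]; exact hplt
          · have : φ (τ ((1/2) * Real.log (lam - φ p)) p) = φ (τ 0 p) := hc _ _
            rw [this, hflow0]
        · -- strictly increasing orbit: use exists_fixed
          apply exists_fixed _ lam (hcont p) hsm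
          rcases hp with h | ⟨t₁, ht₁⟩
          · exact ⟨0, by rw [hflow0]; exact h⟩
          · exact ⟨t₁ - 1, by rw [← ht₁]; exact hsm (by linarith)⟩
      obtain ⟨t₀, ht₀lt, ht₀⟩ := hex
      refine ⟨τ t₀ p, ht₀lt, ?_⟩
      rw [hg]
      have harg : -(1 / 2) * Real.log (lam - φ (τ t₀ p)) = -t₀ := by
        linarith
      rw [harg, hinv]
end

section
/- Let M be a set, and let τ : ℝ → M → M be a flow: τ(0, p) = p and τ(s + t, p) = τ(s, τ(t, p)) for all s, t ∈ ℝ, p ∈ M. Let φ : M → ℝ be such that for every m ∈ M the function t ↦ φ(τ(t, m)) is continuous and monotone nondecreasing. Let a > 0 and let h : ℝ → ℝ be continuous and strictly increasing with h(t) → 0 as t → −∞ and h(t) → a as t → +∞, and let λ ∈ ℝ. Then {m ∈ M : ∃ t, φ(τ(t, m)) + h(t) = λ} = {m ∈ M : ∃ t, λ − a < φ(τ(t, m)) < λ}; moreover, for each m in this set, the time t with φ(τ(t, m)) + h(t) = λ is unique. -/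
/-- Orbit-level identification inside Theorem 3.2 of "Kähler cuts": with `τ` the
gradient flow of the moment map `φ` (so `φ` is continuous and nondecreasing along
flow lines) and `h(t) = H(e^{2t})` continuous, strictly increasing, with limits `0`
at `-∞` and `a` at `+∞`, the set of points whose orbit meets the shifted level set
`{φ(τ(t,m)) + h(t) = λ}` equals `{m | ∃ t, λ - a < φ(τ(t,m)) < λ}`, and for each
such point the meeting time is unique. -/
theorem stmt_8 {M : Type*} (τ : ℝ → M → M)
    (hflow0 : ∀ p : M, τ 0 p = p)
    (hflow : ∀ s t : ℝ, ∀ p : M, τ (s + t) p = τ s (τ t p))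
    (φ : M → ℝ)
    (hcont : ∀ m : M, Continuous (fun t : ℝ => φ (τ t m)))
    (hmono : ∀ m : M, Monotone (fun t : ℝ => φ (τ t m)))
    (a : ℝ) (ha : 0 < a) (h : ℝ → ℝ) (hc : Continuous h) (hm : StrictMono h)
    (hbot : Filter.Tendsto h Filter.atBot (nhds 0))
    (htop : Filter.Tendsto h Filter.atTop (nhds a)) (lam : ℝ) :
    {m : M | ∃ t : ℝ, φ (τ t m) + h t = lam} =
        {m : M | ∃ t : ℝ, lam - a < φ (τ t m) ∧ φ (τ t m) < lam} ∧
      ∀ m : M, (∃ t : ℝ, φ (τ t m) + h t = lam) →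
        ∃! t : ℝ, φ (τ t m) + h t = lam := by
  -- bounds on h
  have hlt_a : ∀ t : ℝ, h t < a := by
    intro t
    have h1 : h (t + 1) ≤ a := hm.monotone.ge_of_tendsto htop (t + 1)
    exact lt_of_lt_of_le (hm (by linarith)) h1
  have hgt_0 : ∀ t : ℝ, 0 < h t := by
    intro t
    have h1 : (0 : ℝ) ≤ h (t - 1) := hm.monotone.le_of_tendsto hbot (t - 1)
    exact lt_of_le_of_lt h1 (hm (by linarith))
  have gsm : ∀ m : M, StrictMono (fun t : ℝ => φ (τ t m) + h t) := fun m =>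
    (hmono m).add_strictMono hm
  constructor
  · ext m
    simp only [Set.mem_setOf_eq]
    constructor
    · rintro ⟨t, ht⟩
      refine ⟨t, ?_, ?_⟩
      · have := hlt_a t; linarith
      · have := hgt_0 t; linarith
    · rintro ⟨t0, h1, h2⟩
      -- find t2 with value ≥ lam
      have hev2 : ∀ᶠ T in Filter.atTop, lam - φ (τ t0 m) < h T :=
        htop.eventually (eventually_gt_nhds (by linarith))
      obtain ⟨T, hT1, hT2⟩ := (hev2.and (Filter.eventually_ge_atTop t0)).exists
      have hTval : lam ≤ φ (τ T m) + h T := by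
        have := hmono m hT2; simp only at this; linarith
      -- find t1 with value ≤ lam
      have hev1 : ∀ᶠ t in Filter.atBot, h t < lam - φ (τ t0 m) :=
        hbot.eventually (eventually_lt_nhds (by linarith))
      obtain ⟨S, hS1, hS2⟩ := (hev1.and (Filter.eventually_le_atBot t0)).exists
      have hSval : φ (τ S m) + h S ≤ lam := by
        have := hmono m hS2; simp only at this; linarith
      have hST : S ≤ T := by
        by_contra hcon
        have := gsm m (lt_of_not_ge hcon)
        simp only at this; linarith
      have := intermediate_value_Icc hST ((hcont m).add hc).continuousOn
      obtain ⟨t, _, ht⟩ := this ⟨hSval, hTval⟩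
      exact ⟨t, ht⟩
  · rintro m ⟨t, ht⟩
    exact ⟨t, ht, fun s hs => (gsm m).injective (hs.trans ht.symm)⟩
end
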